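/- arXiv:1512.04462 — 2 statements merged into one kernel-verified Lean document; each statement's English description precedes it below -/
import Mathlib

section
/- For all β, h ≥ 0, all γ, γ' ≥ 0 and every Borel probability measure ν on [0,1], the Monge–Kantorovich distance satisfies d(T_{β,h,γ}(ν), T_{β,h,γ'}(ν)) ≤ |γ − γ'|. -/
open MeasureTheory Real

noncomputable section

/-- The unit interval `[0,1]` as a measurable space. -/
abbrev I01 := Set.Icc (0 : ℝ) 1

/-- The Monge–Kantorovich (Wasserstein-1) distance between two measures on `[0,1]`:
the infimum of `E|X - Y|` over all couplings. -/
def MKdist (μ ν : Measure I01) : ℝ :=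
  sInf {c | ∃ pr : Measure (I01 × I01), IsProbabilityMeasure pr ∧
    pr.fst = μ ∧ pr.snd = ν ∧ c = ∫ p, |(p.1 : ℝ) - (p.2 : ℝ)| ∂pr}

/-- The Poisson distribution with parameter `γ` on `ℕ`. -/
def poissonMeasure (γ : ℝ) : Measure ℕ :=
  Measure.sum fun n => ENNReal.ofReal (exp (-γ) * γ ^ n / n.factorial) • Measure.dirac n

/-- The value `(1 + e^{-h} ∏_{i<r} (1 - (1-e^{-β}) x_i)^{-1})^{-1}`, projected to `[0,1]`. -/
def Tval (β h : ℝ) {r : ℕ} (x : Fin r → I01) : I01 :=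
  Set.projIcc 0 1 zero_le_one
    ((1 + exp (-h) * (∏ i, (1 - (1 - exp (-β)) * (x i : ℝ)))⁻¹)⁻¹)

/-- The cavity operator `T_{β,h,γ}` on probability measures on `[0,1]`:
the law of `(1 + e^{-h} ∏_{i≤r} (1 - (1-e^{-β}) X_i)^{-1})^{-1}` where the `X_i`
are i.i.d. `ν`-distributed and `r` is an independent Poisson(γ) random variable. -/
def Tmap (β h γ : ℝ) (ν : Measure I01) : Measure I01 :=
  (poissonMeasure γ).bind fun r =>
    Measure.map (fun x : Fin r → I01 => Tval β h x) (Measure.pi fun _ : Fin r => ν)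

/-- The replica-symmetry constant `C(β,γ)`. -/
def Cconst (β γ : ℝ) : ℝ :=
  7 * (γ + γ ^ 3) * (exp (2 * β) - 1) * exp (γ * (exp (2 * β) - 1))

/-- Spin value of a Boolean. -/
def b2r (b : Bool) : ℝ := if b then 1 else 0

/-- Bernoulli measure on `Bool` with success probability `p`. -/
def bern (p : ℝ) : Measure Bool :=
  ENNReal.ofReal (1 - p) • Measure.dirac false + ENNReal.ofReal p • Measure.dirac true

/-- The disorder: i.i.d. Bernoulli(γ/N) variables `g i j` (only `i < j` is used). -/
def disorderMeasure (N : ℕ) (γ : ℝ) : Measure (Fin N → Fin N → Bool) :=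
  Measure.pi fun _ => Measure.pi fun _ => bern (γ / N)

/-- The Hamiltonian `H_{N,β,h,γ}(σ) = h Σ σ_i - β Σ_{i<j} g_{ij} σ_i σ_j`. -/
def Ham (N : ℕ) (β h : ℝ) (g : Fin N → Fin N → Bool) (σ : Fin N → Bool) : ℝ :=
  h * ∑ i, b2r (σ i) -
    β * ∑ i, ∑ j, (if i < j ∧ g i j = true then b2r (σ i) * b2r (σ j) else 0)

/-- The partition function. -/
def Zfun (N : ℕ) (β h : ℝ) (g : Fin N → Fin N → Bool) : ℝ :=
  ∑ σ : Fin N → Bool, exp (Ham N β h g σ)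

/-- Quenched Gibbs expectation `⟨f⟩`. -/
def gibbs (N : ℕ) (β h : ℝ) (g : Fin N → Fin N → Bool) (f : (Fin N → Bool) → ℝ) : ℝ :=
  (∑ σ : Fin N → Bool, f σ * exp (Ham N β h g σ)) / Zfun N β h g

/-- Expectation `⟨f⟩_Y` under the product measure on spins with marginals `⟨σ_i⟩_Y = Y i`. -/
def prodExp (k : ℕ) (Y : Fin k → ℝ) (f : (Fin k → Bool) → ℝ) : ℝ :=
  ∑ σ : Fin k → Bool, f σ * ∏ i, (if σ i then Y i else 1 - Y i)

/-- Mean free energy `f_N(β,h,γ)`. -/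
def freeEnergy (N : ℕ) (β h γ : ℝ) : ℝ :=
  ∫ g, (N : ℝ)⁻¹ * log (Zfun N β h g) ∂(disorderMeasure N γ)

/-- Unnormalized mean free energy `F_N(β,h,γ) = E log Z_N`. -/
def Fenergy (N : ℕ) (β h γ : ℝ) : ℝ :=
  ∫ g, log (Zfun N β h g) ∂(disorderMeasure N γ)

end

/-! For `γ ≤ γ' = γ + s`, realise the Poisson(γ') number of factors as `r + m` with independent
`r ~ Poisson(γ)` and `m ~ Poisson(s)`, and feed the same i.i.d. samples to the first `r` factors of
both products. The two outputs then agree unless `m ≠ 0`, an event of probability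
`1 - e^{-s} ≤ s`, and they always lie in `[0,1]`, so this coupling costs at most `s`. -/

open Set
open scoped ProbabilityTheory NNReal

lemma MKdist_le_integral {μ ν : Measure I01} (ρ : Measure (I01 × I01)) [IsProbabilityMeasure ρ]
    (h₁ : ρ.fst = μ) (h₂ : ρ.snd = ν) :
    MKdist μ ν ≤ ∫ p, |(p.1 : ℝ) - (p.2 : ℝ)| ∂ρ :=
  csInf_le ⟨0, by rintro _ ⟨ρ, -, -, -, rfl⟩; exact integral_nonneg fun _ => abs_nonneg _⟩
    ⟨ρ, inferInstance, h₁, h₂, rfl⟩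

lemma MKdist_comm (μ ν : Measure I01) : MKdist μ ν = MKdist ν μ := by
  unfold MKdist
  congr 1
  ext c
  constructor <;>
  · rintro ⟨ρ, hρ, h₁, h₂, rfl⟩
    refine ⟨ρ.map Prod.swap, Measure.isProbabilityMeasure_map (by fun_prop),
      by rw [Measure.fst_map_swap, h₂], by rw [Measure.snd_map_swap, h₁], ?_⟩
    rw [integral_map (by fun_prop) (by fun_prop)]
    simp_rw [Prod.fst_swap, Prod.snd_swap, abs_sub_comm]

lemma integral_abs_sub_le_measureReal_compl_diagonal (ρ : Measure (I01 × I01))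
    [IsFiniteMeasure ρ] : ∫ p, |(p.1 : ℝ) - (p.2 : ℝ)| ∂ρ ≤ ρ.real (diagonal I01)ᶜ := by
  have hle (p : I01 × I01) : |(p.1 : ℝ) - p.2| ≤ (diagonal I01)ᶜ.indicator 1 p := by
    by_cases hp : p.1 = p.2
    · simp [hp]
    · rw [indicator_of_mem (show p ∈ (diagonal I01)ᶜ from hp), Pi.one_apply, abs_sub_le_iff]
      constructor <;> linarith [p.1.2.1, p.1.2.2, p.2.2.1, p.2.2.2]
  rw [← integral_indicator_one measurableSet_diagonal.compl]
  exact integral_mono_of_nonneg (.of_forall fun _ => abs_nonneg _)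
    ((integrable_const 1).indicator measurableSet_diagonal.compl) (.of_forall hle)

namespace MeasureTheory.Measure

variable {α β γ : Type*} [MeasurableSpace α] [MeasurableSpace β] [MeasurableSpace γ]

lemma map_bind {m : Measure α} {f : α → Measure β} (hf : AEMeasurable f m) {g : β → γ}
    (hg : Measurable g) : (m.bind f).map g = m.bind fun a => (f a).map g := by
  ext s hs
  have hfg : AEMeasurable (fun a => (f a).map g) m := (measurable_map g hg).comp_aemeasurable hf
  rw [map_apply hg hs, bind_apply (hg hs) hf, bind_apply hs hfg]
  simp_rw [map_apply hg hs]

lemma bind_map (m : Measure α) {g : α → β} (hg : Measurable g) {f : β → Measure γ}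
    (hf : Measurable f) : (m.map g).bind f = m.bind (f ∘ g) := by
  rw [bind, bind, map_map hf hg]

lemma bind_apply_le_of_le_indicator {m : Measure α} {f : α → Measure β} {s : Set β} {t : Set α}
    (hs : MeasurableSet s) (ht : MeasurableSet t) (hf : ∀ a, f a s ≤ t.indicator 1 a) :
    m.bind f s ≤ m t :=
  (bind_apply_le f hs).trans <| (lintegral_mono hf).trans_eq (lintegral_indicator_one ht)

end MeasureTheory.Measure

lemma measurable_Tval (β h : ℝ) (r : ℕ) : Measurable (Tval β h : (Fin r → I01) → I01) := by
  unfold Tval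
  fun_prop

lemma map_append_prod_pi {X : Type*} [MeasurableSpace X] (ν : Measure X) [SigmaFinite ν]
    (n m : ℕ) :
    ((Measure.pi fun _ : Fin n => ν).prod (Measure.pi fun _ : Fin m => ν)).map
      (fun q => Fin.append q.1 q.2) = Measure.pi fun _ : Fin (n + m) => ν := by
  have happend : (fun q : (Fin n → X) × (Fin m → X) => Fin.append q.1 q.2) =
      MeasurableEquiv.piCongrLeft (fun _ => X) finSumFinEquiv ∘
        (MeasurableEquiv.sumPiEquivProdPi fun _ => X).symm := by
    funext q i
    obtain ⟨j, rfl⟩ := finSumFinEquiv.surjective i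
    change _ = Equiv.piCongrLeft (fun _ => X) finSumFinEquiv _ _
    rw [Equiv.piCongrLeft_apply_apply]
    cases j <;> simp [MeasurableEquiv.coe_sumPiEquivProdPi_symm]
  rw [happend]
  exact ((measurePreserving_piCongrLeft (fun _ => ν) finSumFinEquiv).comp
    (measurePreserving_sumPiEquivProdPi_symm fun _ => ν)).map_eq

lemma poissonMeasure_real_compl_zero_le (r : ℝ≥0) : Po(r).real {0}ᶜ ≤ r := by
  rw [probReal_compl_eq_one_sub (measurableSet_singleton 0),
    ProbabilityTheory.poissonMeasure_real_singleton]
  simp only [pow_zero, Nat.factorial_zero, Nat.cast_one, div_one, mul_one]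
  linarith [add_one_le_exp (-(r : ℝ))]

section Cavity

variable (β h : ℝ) (ν : Measure I01)

lemma measurable_sharedSample (n m : ℕ) :
    Measurable fun q : (Fin n → I01) × (Fin m → I01) =>
      (Tval β h q.1, Tval β h (Fin.append q.1 q.2)) :=
  ((measurable_Tval β h n).comp measurable_fst).prodMk
    ((measurable_Tval β h (n + m)).comp (Fin.continuous_append n m).measurable)

noncomputable def lawTval (n : ℕ) : Measure I01 :=
  (Measure.pi fun _ : Fin n => ν).map (Tval β h)

noncomputable def sharedSampleCoupling (n m : ℕ) : Measure (I01 × I01) :=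
  ((Measure.pi fun _ : Fin n => ν).prod (Measure.pi fun _ : Fin m => ν)).map
    fun q => (Tval β h q.1, Tval β h (Fin.append q.1 q.2))

lemma sharedSampleCoupling_zero_apply_compl_diagonal (n : ℕ) :
    sharedSampleCoupling β h ν n 0 (diagonal I01)ᶜ = 0 := by
  rw [sharedSampleCoupling, Measure.map_apply (measurable_sharedSample β h n 0)
    measurableSet_diagonal.compl]
  have hempty : (fun q : (Fin n → I01) × (Fin 0 → I01) =>
      (Tval β h q.1, Tval β h (Fin.append q.1 q.2))) ⁻¹' (diagonal I01)ᶜ = ∅ := by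
    ext q
    simp [Fin.append_right_nil]
  rw [hempty, measure_empty]

noncomputable def poissonCoupling (r s : ℝ≥0) : Measure (I01 × I01) :=
  (Po(r).prod Po(s)).bind fun p => sharedSampleCoupling β h ν p.1 p.2

lemma measurable_sharedSampleCoupling :
    Measurable fun p : ℕ × ℕ => sharedSampleCoupling β h ν p.1 p.2 :=
  measurable_of_countable _

variable [IsProbabilityMeasure ν]

instance (n m : ℕ) : IsProbabilityMeasure (sharedSampleCoupling β h ν n m) :=
  Measure.isProbabilityMeasure_map (measurable_sharedSample β h n m).aemeasurable

lemma fst_sharedSampleCoupling (n m : ℕ) :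
    (sharedSampleCoupling β h ν n m).fst = lawTval β h ν n := by
  have hfst : (fun q : (Fin n → I01) × (Fin m → I01) => Tval β h q.1) = Tval β h ∘ Prod.fst :=
    rfl
  rw [sharedSampleCoupling, Measure.fst_map_prodMk (measurable_sharedSample β h n m).snd, hfst,
    ← Measure.map_map (measurable_Tval β h n) measurable_fst, ← Measure.fst, Measure.fst_prod,
    lawTval]

lemma snd_sharedSampleCoupling (n m : ℕ) :
    (sharedSampleCoupling β h ν n m).snd = lawTval β h ν (n + m) := by
  rw [sharedSampleCoupling, Measure.snd_map_prodMk (measurable_sharedSample β h n m).fst, lawTval,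
    ← map_append_prod_pi ν n m,
    Measure.map_map (measurable_Tval β h _) (Fin.continuous_append n m).measurable]
  rfl

instance (r s : ℝ≥0) : IsProbabilityMeasure (poissonCoupling β h ν r s) :=
  isProbabilityMeasure_bind (measurable_sharedSampleCoupling β h ν).aemeasurable
    (.of_forall fun _ => inferInstance)

lemma fst_poissonCoupling (r s : ℝ≥0) : (poissonCoupling β h ν r s).fst = Tmap β h r ν :=
  calc (poissonCoupling β h ν r s).fst
      = (Po(r).prod Po(s)).bind (lawTval β h ν ∘ Prod.fst) := by
        rw [poissonCoupling, Measure.fst,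
          Measure.map_bind (measurable_sharedSampleCoupling β h ν).aemeasurable measurable_fst]
        exact congrArg _ (funext fun p => fst_sharedSampleCoupling β h ν p.1 p.2)
    _ = ((Po(r).prod Po(s)).map Prod.fst).bind (lawTval β h ν) :=
        (Measure.bind_map _ measurable_fst (measurable_of_countable _)).symm
    -- the frozen `poissonMeasure ↑r` is Mathlib's `Po(r)` by definition
    _ = Tmap β h r ν := by rw [← Measure.fst, Measure.fst_prod]; rfl

lemma snd_poissonCoupling (r s : ℝ≥0) :
    (poissonCoupling β h ν r s).snd = Tmap β h ↑(r + s) ν :=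
  calc (poissonCoupling β h ν r s).snd
      = (Po(r).prod Po(s)).bind (lawTval β h ν ∘ fun p => p.1 + p.2) := by
        rw [poissonCoupling, Measure.snd,
          Measure.map_bind (measurable_sharedSampleCoupling β h ν).aemeasurable measurable_snd]
        exact congrArg _ (funext fun p => snd_sharedSampleCoupling β h ν p.1 p.2)
    _ = (Po(r) ∗ Po(s)).bind (lawTval β h ν) :=
        (Measure.bind_map _ (measurable_of_countable _) (measurable_of_countable _)).symm
    _ = Tmap β h ↑(r + s) ν := by
        rw [ProbabilityTheory.poissonMeasure_conv_poissonMeasure]; rfl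

lemma poissonCoupling_apply_compl_diagonal_le (r s : ℝ≥0) :
    poissonCoupling β h ν r s (diagonal I01)ᶜ ≤ (Po(r).prod Po(s)) (univ ×ˢ {0}ᶜ) := by
  refine Measure.bind_apply_le_of_le_indicator measurableSet_diagonal.compl
    (MeasurableSet.univ.prod (measurableSet_singleton 0).compl) fun p => ?_
  by_cases hp : p.2 = 0
  · simp [hp, sharedSampleCoupling_zero_apply_compl_diagonal]
  · rw [indicator_of_mem (by simpa using hp), Pi.one_apply]
    exact prob_le_one

theorem MKdist_Tmap_add_le (r s : ℝ≥0) :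
    MKdist (Tmap β h r ν) (Tmap β h ↑(r + s) ν) ≤ s :=
  calc MKdist _ _ ≤ ∫ p, |(p.1 : ℝ) - (p.2 : ℝ)| ∂poissonCoupling β h ν r s :=
        MKdist_le_integral _ (fst_poissonCoupling β h ν r s) (snd_poissonCoupling β h ν r s)
    _ ≤ (poissonCoupling β h ν r s).real (diagonal I01)ᶜ :=
        integral_abs_sub_le_measureReal_compl_diagonal _
    _ ≤ (Po(r).prod Po(s)).real (univ ×ˢ {0}ᶜ) :=
        ENNReal.toReal_mono (measure_ne_top _ _) (poissonCoupling_apply_compl_diagonal_le β h ν r s)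
    _ = Po(s).real {0}ᶜ := by rw [measureReal_prod_prod, probReal_univ, one_mul]
    _ ≤ s := poissonMeasure_real_compl_zero_le s

end Cavity

theorem T_operator_gamma_continuity_general (β h γ γ' : ℝ)
    (hγ : 0 ≤ γ) (hγ' : 0 ≤ γ') (ν : Measure I01) (hν : IsProbabilityMeasure ν) :
    MKdist (Tmap β h γ ν) (Tmap β h γ' ν) ≤ |γ - γ'| := by
  lift γ to ℝ≥0 using hγ
  lift γ' to ℝ≥0 using hγ'
  wlog hle : γ ≤ γ' generalizing γ γ'
  · rw [MKdist_comm, abs_sub_comm]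
    exact this γ' γ (le_of_not_ge hle)
  obtain ⟨s, rfl⟩ := exists_add_of_le hle
  simpa [abs_sub_comm] using MKdist_Tmap_add_le β h ν γ s

/-- For all `β, h ≥ 0`, all `γ, γ' ≥ 0` and every Borel probability measure `ν`
on `[0,1]`, `d(T_{β,h,γ}(ν), T_{β,h,γ'}(ν)) ≤ |γ − γ'|`. -/
theorem T_operator_gamma_continuity (β h γ γ' : ℝ) (hβ : 0 ≤ β) (hh : 0 ≤ h)
    (hγ : 0 ≤ γ) (hγ' : 0 ≤ γ') (ν : Measure I01) (hν : IsProbabilityMeasure ν) :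
    MKdist (Tmap β h γ ν) (Tmap β h γ' ν) ≤ |γ - γ'| :=
  T_operator_gamma_continuity_general β h γ γ' hγ hγ' ν hν
end

section
/- Let N ≥ 2, β, h ≥ 0 and 0 ≤ γ ≤ N, and let F_N(β,h,γ) = E log Z_N(β,h,γ) denote the unnormalized free energy. Then F_N(β,h,γ) − F_{N−1}(β,h,(N−1)γ/N) = E log(1 + ⟨exp(h − β·Σ_{i≤N−1} g_{iN} σ_i)⟩_−), where ⟨·⟩_− is the quenched Gibbs expectation of the (N−1)-spin system with parameters β, h and dilution parameter γ' = (N−1)γ/N, built from the same disorder variables g_{ij}, 1 ≤ i < j ≤ N−1. -/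
open MeasureTheory Real

/-! Summing over the last spin splits the partition function pointwise in the disorder as
`Z_{N+1} = Z_- · (1 + ⟨exp(h - β Σ_{i ≤ N} g_{i,N+1} σ_i)⟩_-)`, so `log Z_{N+1}` is
`log Z_-` plus the cavity term. Dropping the last row and column of the disorder keeps the
edge probability `γ / (N + 1) = (Nγ / (N + 1)) / N`, so `E log Z_-` is `F_N(β, h, Nγ / (N + 1))`. -/

lemma isProbabilityMeasure_bern {p : ℝ} (hp₀ : 0 ≤ p) (hp₁ : p ≤ 1) :
    IsProbabilityMeasure (bern p) :=
  ⟨by simp [bern, ← ENNReal.ofReal_add (sub_nonneg.2 hp₁) hp₀]⟩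

lemma measurePreserving_init {n : ℕ} {X : Type*} [MeasurableSpace X]
    (μ : Fin (n + 1) → Measure X) [∀ i, SigmaFinite (μ i)]
    [IsProbabilityMeasure (μ (Fin.last n))] :
    MeasurePreserving Fin.init (Measure.pi μ) (Measure.pi fun i => μ i.castSucc) := by
  convert (measurePreserving_snd (μ := μ (Fin.last n))).comp
    (measurePreserving_piFinSuccAbove μ (Fin.last n)) using 2
  · ext x i
    simp [Fin.init]
  · simp only [Fin.succAbove_last]

lemma isProbabilityMeasure_disorderMeasure {N : ℕ} {γ : ℝ} (hγ₀ : 0 ≤ γ) (hγ : γ ≤ N) :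
    IsProbabilityMeasure (disorderMeasure N γ) := by
  have := isProbabilityMeasure_bern (div_nonneg hγ₀ N.cast_nonneg)
    (div_le_one_of_le₀ hγ N.cast_nonneg)
  unfold disorderMeasure
  infer_instance

def initDisorder {N : ℕ} (g : Fin (N + 1) → Fin (N + 1) → Bool) : Fin N → Fin N → Bool :=
  fun i j => g i.castSucc j.castSucc

def cavityField (N : ℕ) (β h : ℝ) (g : Fin (N + 1) → Fin (N + 1) → Bool)
    (σ : Fin N → Bool) : ℝ :=
  h - β * ∑ i : Fin N, (if g i.castSucc (Fin.last N) = true then b2r (σ i) else 0)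

lemma measurePreserving_initDisorder (N : ℕ) {γ : ℝ} (hγ₀ : 0 ≤ γ) (hγ : γ ≤ (N : ℝ) + 1) :
    MeasurePreserving initDisorder (disorderMeasure (N + 1) γ)
      (disorderMeasure N ((N : ℝ) * γ / ((N : ℝ) + 1))) := by
  have : IsProbabilityMeasure (bern (γ / ((N : ℝ) + 1))) :=
    isProbabilityMeasure_bern (by positivity) ((div_le_one (by positivity)).2 hγ)
  have hrows := measurePreserving_init fun _ : Fin (N + 1) =>
    Measure.pi fun _ : Fin (N + 1) => bern (γ / ((N : ℝ) + 1))
  have hentries := measurePreserving_pi _ _ fun _ : Fin N =>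
    measurePreserving_init fun _ : Fin (N + 1) => bern (γ / ((N : ℝ) + 1))
  have hsource : disorderMeasure (N + 1) γ =
      Measure.pi fun _ => Measure.pi fun _ => bern (γ / ((N : ℝ) + 1)) := by
    simp [disorderMeasure]
  have htarget : disorderMeasure N ((N : ℝ) * γ / ((N : ℝ) + 1)) =
      Measure.pi fun _ => Measure.pi fun _ => bern (γ / ((N : ℝ) + 1)) := by
    refine congrArg Measure.pi (funext fun i => ?_)
    have : (N : ℝ) ≠ 0 := Nat.cast_ne_zero.2 (Fin.pos i).ne'
    rw [show (N : ℝ) * γ / ((N : ℝ) + 1) / N = γ / ((N : ℝ) + 1) by field_simp]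
  rw [hsource, htarget]
  exact hentries.comp hrows

lemma Ham_snoc (N : ℕ) (β h : ℝ) (g : Fin (N + 1) → Fin (N + 1) → Bool) (σ : Fin N → Bool)
    (b : Bool) :
    Ham (N + 1) β h g (Fin.snoc σ b) =
      Ham N β h (initDisorder g) σ + cavityField N β h g σ * b2r b := by
  have hlast : ∀ j : Fin N, ¬ Fin.last N < j.castSucc := fun j => (Fin.castSucc_lt_last j).asymm
  simp only [Ham, cavityField, initDisorder, Fin.sum_univ_castSucc, Fin.snoc_castSucc,
    Fin.snoc_last, Fin.castSucc_lt_castSucc_iff, Fin.castSucc_lt_last, true_and, hlast,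
    false_and, if_false, lt_irrefl, Finset.sum_const_zero, add_zero, Finset.sum_add_distrib]
  have hfield : ∀ i : Fin N,
      (if g i.castSucc (Fin.last N) = true then b2r (σ i) * b2r b else 0) =
      (if g i.castSucc (Fin.last N) = true then b2r (σ i) else 0) * b2r b := by
    intro i; split <;> simp
  rw [Finset.sum_congr rfl fun i _ => hfield i, ← Finset.sum_mul]
  ring_nf
  -- the two sides now differ only in the `Decidable` instances of the `if`s
  congr!

lemma Zfun_pos (N : ℕ) (β h : ℝ) (g : Fin N → Fin N → Bool) : 0 < Zfun N β h g :=
  Finset.sum_pos (fun _ _ => exp_pos _) Finset.univ_nonempty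

lemma Zfun_succ (N : ℕ) (β h : ℝ) (g : Fin (N + 1) → Fin (N + 1) → Bool) :
    Zfun (N + 1) β h g = Zfun N β h (initDisorder g) +
      ∑ σ : Fin N → Bool, exp (cavityField N β h g σ) * exp (Ham N β h (initDisorder g) σ) := by
  have hsnoc : ∀ p : Bool × (Fin N → Bool), Fin.snocEquiv (fun _ => Bool) p = Fin.snoc p.2 p.1 :=
    fun _ => rfl
  rw [Zfun, ← (Fin.snocEquiv fun _ => Bool).sum_comp, Fintype.sum_prod_type, Fintype.sum_bool]
  simp only [hsnoc, Ham_snoc, b2r, Bool.false_eq_true, if_true, if_false, mul_one, mul_zero,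
    add_zero, exp_add, Zfun]
  rw [add_comm]
  simp only [mul_comm]

lemma Zfun_succ_eq_mul (N : ℕ) (β h : ℝ) (g : Fin (N + 1) → Fin (N + 1) → Bool) :
    Zfun (N + 1) β h g = Zfun N β h (initDisorder g) *
      (1 + gibbs N β h (initDisorder g) fun σ => exp (cavityField N β h g σ)) := by
  rw [Zfun_succ, gibbs, mul_add, mul_one, mul_div_cancel₀ _ (Zfun_pos _ _ _ _).ne']

lemma log_Zfun_succ (N : ℕ) (β h : ℝ) (g : Fin (N + 1) → Fin (N + 1) → Bool) :
    log (Zfun (N + 1) β h g) = log (Zfun N β h (initDisorder g)) +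
      log (1 + gibbs N β h (initDisorder g) fun σ => exp (cavityField N β h g σ)) := by
  rw [Zfun_succ_eq_mul, log_mul]
  · exact (Zfun_pos _ _ _ _).ne'
  · have : 0 ≤ gibbs N β h (initDisorder g) fun σ => exp (cavityField N β h g σ) := by
      unfold gibbs Zfun; positivity
    positivity

theorem cavity_free_energy_step_general (N : ℕ) (β h γ : ℝ)
    (hγ0 : 0 ≤ γ) (hγ : γ ≤ (N : ℝ) + 1) :
    Fenergy (N + 1) β h γ - Fenergy N β h ((N : ℝ) * γ / ((N : ℝ) + 1)) =
      ∫ g, Real.log (1 + gibbs N β h (fun i j => g i.castSucc j.castSucc)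
        (fun σ => Real.exp (h - β * ∑ i : Fin N,
          (if g i.castSucc (Fin.last N) = true then b2r (σ i) else 0))))
        ∂(disorderMeasure (N + 1) γ) := by
  have : IsProbabilityMeasure (disorderMeasure (N + 1) γ) :=
    isProbabilityMeasure_disorderMeasure hγ0 (by push_cast; exact hγ)
  have hinit := measurePreserving_initDisorder N hγ0 hγ
  rw [Fenergy, Fenergy, ← hinit.map_eq, integral_map hinit.measurable.aemeasurable
    Measurable.of_discrete.aestronglyMeasurable, ← integral_sub .of_finite .of_finite]
  refine integral_congr_ae (ae_of_all _ fun g => ?_)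
  dsimp only
  rw [log_Zfun_succ]
  exact add_sub_cancel_left _ _

/-- cavity step for the unnormalized free energy: for a system of
`N+1 ≥ 2` spins, `β, h ≥ 0`, `0 ≤ γ ≤ N+1`,
`F_{N+1}(β,h,γ) − F_N(β,h,Nγ/(N+1)) = E log(1 + ⟨exp(h − β Σ_{i≤N} g_{i,N+1} σ_i)⟩_-)`,
where `⟨·⟩_-` is the quenched Gibbs expectation of the `N`-spin system with dilution
`γ' = Nγ/(N+1)` (same edge probability `γ/(N+1)`), built from the same disorder
variables `g_{ij}`, `i < j ≤ N`. -/
theorem cavity_free_energy_step (N : ℕ) (hN : 1 ≤ N) (β h γ : ℝ)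
    (hβ : 0 ≤ β) (hh : 0 ≤ h) (hγ0 : 0 ≤ γ) (hγ : γ ≤ (N : ℝ) + 1) :
    Fenergy (N + 1) β h γ - Fenergy N β h ((N : ℝ) * γ / ((N : ℝ) + 1)) =
      ∫ g, Real.log (1 + gibbs N β h (fun i j => g i.castSucc j.castSucc)
        (fun σ => Real.exp (h - β * ∑ i : Fin N,
          (if g i.castSucc (Fin.last N) = true then b2r (σ i) else 0))))
        ∂(disorderMeasure (N + 1) γ) :=
  cavity_free_energy_step_general N β h γ hγ0 hγ
end
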